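/- Let A ⊂ ℤ\{0} be a finite symmetric set, let (z_a)_{a∈A} be real numbers with z_a = z_{−a} for all a ∈ A, and let K ≥ 0 satisfy Σ_{a∈A} z_a e(ax) ≥ −K for all x ∈ 𝕋. Then for every positive integer ℓ, Σ_{a∈A} z_a^{2ℓ} e(ax) ≥ −K^{2ℓ} for all x ∈ 𝕋. -/

import Mathlib

/-!
If `f ≥ -C` and `g ≥ -D` are real trigonometric polynomials with mean zero, then
`∫ (f(t) + C) (g(x - t) + D) dt ≥ 0`; the cross terms integrate to zero and the product term is
the convolution `f ⋆ g`, whose coefficients are the products of those of `f` and `g`. Hence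
`f ⋆ g ≥ -CD`, and the `n`-fold convolution power of `∑ z_a e(ax)` gives `∑ z_a^n e(ax) ≥ -K^n`.
The integral is replaced by an average over the grid `j / N`, which is exact as soon as `N`
exceeds every difference of frequencies.
-/

/-- `e(x) = e^{2πix}`. -/
noncomputable def eC (x : ℝ) : ℂ := Complex.exp (2 * Real.pi * Complex.I * x)

open Finset ComplexConjugate

lemma eC_add (x y : ℝ) : eC (x + y) = eC x * eC y := by
  rw [eC, eC, eC, ← Complex.exp_add]; push_cast; ring_nf

lemma eC_zero : eC 0 = 1 := by simp [eC]

lemma eC_intCast (n : ℤ) : eC n = 1 := by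
  rw [eC, show 2 * (Real.pi : ℂ) * Complex.I * ((n : ℝ) : ℂ) = n * (2 * Real.pi * Complex.I) by
    push_cast; ring, Complex.exp_int_mul_two_pi_mul_I]

lemma eC_eq_one_iff (x : ℝ) : eC x = 1 ↔ ∃ n : ℤ, x = n := by
  refine ⟨fun h => ?_, fun ⟨n, hn⟩ => hn ▸ eC_intCast n⟩
  obtain ⟨n, hn⟩ := Complex.exp_eq_one_iff.mp h
  refine ⟨n, ?_⟩
  have h2pi : 2 * (Real.pi : ℂ) * Complex.I ≠ 0 := by simp [Real.pi_ne_zero]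
  exact_mod_cast mul_left_cancel₀ h2pi (hn.trans (mul_comm _ _))

lemma eC_pow (x : ℝ) (n : ℕ) : eC x ^ n = eC (n * x) := by
  rw [eC, eC, ← Complex.exp_nat_mul]; push_cast; ring_nf

lemma conj_eC (x : ℝ) : conj (eC x) = eC (-x) := by
  rw [eC, eC, ← Complex.exp_conj]
  simp only [map_mul, map_ofNat, Complex.conj_ofReal, Complex.conj_I]
  push_cast; ring_nf

lemma sum_range_eC_mul_div_eq_zero {N : ℕ} {k : ℤ} (hk : ¬ (N : ℤ) ∣ k) :
    ∑ j ∈ range N, eC (k * (j / N)) = 0 := by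
  rcases N.eq_zero_or_pos with rfl | hN
  · simp
  have hN' : (N : ℝ) ≠ 0 := by positivity
  have hroot : eC (k / N) ^ N = 1 := by
    rw [eC_pow, mul_div_cancel₀ _ hN', eC_intCast]
  have hne : eC (k / N) ≠ 1 := by
    rintro h
    obtain ⟨n, hn⟩ := (eC_eq_one_iff _).mp h
    refine hk ⟨n, ?_⟩
    rw [div_eq_iff hN'] at hn
    exact_mod_cast hn.trans (mul_comm _ _)
  calc ∑ j ∈ range N, eC (k * (j / N))
      = ∑ j ∈ range N, eC (k / N) ^ j := by
        refine sum_congr rfl fun j _ => ?_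
        rw [eC_pow]; ring_nf
    _ = 0 := by rw [geom_sum_eq hne, hroot, sub_self, zero_div]

lemma sum_range_eC_mul_add_div_eq_zero {N : ℕ} {k : ℤ} (hk : ¬ (N : ℤ) ∣ k) (y : ℝ) :
    ∑ j ∈ range N, eC (k * (y + j / N)) = 0 := by
  simp_rw [mul_add, eC_add, ← mul_sum, sum_range_eC_mul_div_eq_zero hk, mul_zero]

lemma exists_pos_intCast_dvd_sub_imp_eq (S : Finset ℤ) :
    ∃ N : ℕ, 0 < N ∧ ∀ a ∈ S, ∀ b ∈ S, (N : ℤ) ∣ a - b → a = b := by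
  set M := S.sup Int.natAbs
  refine ⟨2 * M + 1, by omega, fun a ha b hb hdvd => ?_⟩
  have hsub := Int.natAbs_sub_le a b
  have hMa : a.natAbs ≤ M := le_sup ha
  have hMb : b.natAbs ≤ M := le_sup hb
  exact sub_eq_zero.mp (Int.eq_zero_of_dvd_of_natAbs_lt_natAbs hdvd (by omega))

noncomputable def trigSum (A : Finset ℤ) (c : ℤ → ℝ) (x : ℝ) : ℂ :=
  ∑ a ∈ A, (c a : ℂ) * eC (a * x)

section trigSum

variable {A : Finset ℤ} {c : ℤ → ℝ}

lemma conj_trigSum (x : ℝ) : conj (trigSum A c x) = trigSum A c (-x) := by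
  simp only [trigSum, map_sum, map_mul, Complex.conj_ofReal, conj_eC, mul_neg]

lemma trigSum_neg (hsym : ∀ a, a ∈ A ↔ -a ∈ A) (hc : ∀ a ∈ A, c a = c (-a)) (x : ℝ) :
    trigSum A c (-x) = trigSum A c x := by
  refine sum_nbij' (fun a => -a) (fun a => -a) (fun a ha => (hsym a).mp ha)
    (fun a ha => (hsym a).mp ha) (fun a _ => neg_neg a) (fun a _ => neg_neg a) fun a ha => ?_
  rw [hc a ha]; push_cast; ring_nf

lemma trigSum_im (hsym : ∀ a, a ∈ A ↔ -a ∈ A) (hc : ∀ a ∈ A, c a = c (-a)) (x : ℝ) :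
    (trigSum A c x).im = 0 :=
  Complex.conj_eq_iff_im.mp ((conj_trigSum x).trans (trigSum_neg hsym hc x))

lemma sum_range_trigSum_add_div_eq_zero {N : ℕ} (hA : ∀ a ∈ A, ¬ (N : ℤ) ∣ a) (y : ℝ) :
    ∑ j ∈ range N, trigSum A c (y + j / N) = 0 := by
  unfold trigSum
  rw [sum_comm]
  exact sum_eq_zero fun a ha => by
    rw [← mul_sum, sum_range_eC_mul_add_div_eq_zero (hA a ha), mul_zero]

lemma sum_range_trigSum_mul_trigSum_sub {N : ℕ} (hA : ∀ a ∈ A, ∀ b ∈ A, (N : ℤ) ∣ a - b → a = b)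
    (u v : ℤ → ℝ) (x : ℝ) :
    ∑ j ∈ range N, trigSum A u (j / N) * trigSum A v (x - j / N) = N * trigSum A (u * v) x := by
  have horth : ∀ a ∈ A, ∀ b ∈ A,
      ∑ j ∈ range N, eC ((a - b : ℤ) * (j / N)) = if a = b then (N : ℂ) else 0 := by
    intro a ha b hb
    split_ifs with hab
    · simp [hab, eC_zero]
    · exact sum_range_eC_mul_div_eq_zero fun h => hab (hA a ha b hb h)
  calc ∑ j ∈ range N, trigSum A u (j / N) * trigSum A v (x - j / N)
      = ∑ a ∈ A, ∑ b ∈ A, (u a * v b * eC (b * x) : ℂ) *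
          ∑ j ∈ range N, eC ((a - b : ℤ) * (j / N)) := by
        simp_rw [trigSum, sum_mul_sum, mul_sum]
        rw [sum_comm]
        refine sum_congr rfl fun a _ => ?_
        rw [sum_comm]
        refine sum_congr rfl fun b _ => sum_congr rfl fun j _ => ?_
        have hphase : eC (a * (j / N)) * eC (b * (x - j / N)) =
            eC (b * x) * eC ((a - b : ℤ) * (j / N)) := by
          rw [← eC_add, ← eC_add]; push_cast; ring_nf
        linear_combination (u a * v b : ℂ) * hphase
    _ = ∑ a ∈ A, (u a * v a * eC (a * x) : ℂ) * N := by
        refine sum_congr rfl fun a ha => ?_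
        rw [sum_eq_single_of_mem a ha fun b hb hba => by rw [horth a ha b hb, if_neg hba.symm,
          mul_zero], horth a ha a ha, if_pos rfl]
    _ = N * trigSum A (u * v) x := by
        rw [trigSum, mul_sum]
        refine sum_congr rfl fun a _ => ?_
        rw [Pi.mul_apply]; push_cast; ring

theorem neg_mul_le_re_trigSum_mul (h0 : (0 : ℤ) ∉ A) (hsym : ∀ a, a ∈ A ↔ -a ∈ A)
    {u v : ℤ → ℝ} (hu : ∀ a ∈ A, u a = u (-a)) (hv : ∀ a ∈ A, v a = v (-a)) {C D : ℝ}
    (hC : ∀ x, -C ≤ (trigSum A u x).re) (hD : ∀ x, -D ≤ (trigSum A v x).re) (x : ℝ) :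
    -(C * D) ≤ (trigSum A (u * v) x).re := by
  obtain ⟨N, hN, hsep⟩ := exists_pos_intCast_dvd_sub_imp_eq (insert 0 A)
  have hA : ∀ a ∈ A, ¬ (N : ℤ) ∣ a := fun a ha hdvd => h0 <|
    (hsep a (mem_insert_of_mem ha) 0 (mem_insert_self 0 A) (by simpa using hdvd)) ▸ ha
  set f : ℕ → ℝ := fun j => (trigSum A u (j / N)).re
  set g : ℕ → ℝ := fun j => (trigSum A v (x - j / N)).re
  have hf : ∑ j ∈ range N, f j = 0 := by
    simpa [f, ← Complex.re_sum] using
      congrArg Complex.re (sum_range_trigSum_add_div_eq_zero (c := u) hA 0)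
  have hg : ∑ j ∈ range N, g j = 0 := by
    have hrefl : ∀ j : ℕ, trigSum A v (x - j / N) = trigSum A v (-x + j / N) := fun j => by
      rw [← trigSum_neg hsym hv, neg_sub, sub_eq_neg_add]
    simpa [g, hrefl, ← Complex.re_sum] using
      congrArg Complex.re (sum_range_trigSum_add_div_eq_zero (c := v) hA (-x))
  have hfg : ∑ j ∈ range N, f j * g j = N * (trigSum A (u * v) x).re := by
    have hprod := congrArg Complex.re (sum_range_trigSum_mul_trigSum_sub
      (fun a ha b hb => hsep a (mem_insert_of_mem ha) b (mem_insert_of_mem hb)) u v x)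
    simpa [f, g, Complex.re_sum, Complex.mul_re, trigSum_im hsym hu, trigSum_im hsym hv]
      using hprod
  have hnonneg : 0 ≤ ∑ j ∈ range N, (f j + C) * (g j + D) :=
    sum_nonneg fun j _ => mul_nonneg (by linarith [hC (j / N)]) (by linarith [hD (x - j / N)])
  have hexpand : ∑ j ∈ range N, (f j + C) * (g j + D) =
      ∑ j ∈ range N, f j * g j + D * ∑ j ∈ range N, f j + C * ∑ j ∈ range N, g j +
        N * (C * D) := by
    simp only [add_mul, mul_add, sum_add_distrib, mul_sum, sum_const, card_range, nsmul_eq_mul,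
      mul_comm (f _) D]
    ring
  rw [hexpand, hfg, hf, hg] at hnonneg
  have hN' : (0 : ℝ) < N := by exact_mod_cast hN
  nlinarith

end trigSum

theorem neg_pow_le_re_trigSum_pow {A : Finset ℤ} (h0 : (0 : ℤ) ∉ A) (hsym : ∀ a, a ∈ A ↔ -a ∈ A)
    {z : ℤ → ℝ} (hz : ∀ a ∈ A, z a = z (-a)) {K : ℝ} (hK : ∀ x, -K ≤ (trigSum A z x).re)
    {n : ℕ} (hn : 1 ≤ n) (x : ℝ) : -(K ^ n) ≤ (trigSum A (z ^ n) x).re := by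
  induction n, hn using Nat.le_induction generalizing x with
  | base => simpa using hK x
  | succ n _ ih =>
    rw [pow_succ, pow_succ]
    exact neg_mul_le_re_trigSum_mul h0 hsym (fun a ha => by simp only [Pi.pow_apply, hz a ha]) hz
      ih hK x

theorem power_coefficients_general (A : Finset ℤ) (h0 : (0 : ℤ) ∉ A)
    (hsym : ∀ a : ℤ, a ∈ A ↔ -a ∈ A)
    (z : ℤ → ℝ) (hz : ∀ a ∈ A, z a = z (-a)) (K : ℝ)
    (hmin : ∀ x : ℝ, -K ≤ (∑ a ∈ A, (z a : ℂ) * eC ((a : ℝ) * x)).re) :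
    ∀ ℓ : ℕ, 0 < ℓ → ∀ x : ℝ,
      -(K ^ (2 * ℓ)) ≤ (∑ a ∈ A, ((z a ^ (2 * ℓ) : ℝ) : ℂ) * eC ((a : ℝ) * x)).re :=
  fun ℓ hℓ => neg_pow_le_re_trigSum_pow h0 hsym hz hmin (by omega)

/-- Taking `2ℓ`-fold convolutions: if `∑ z_a e(ax) ≥ -K` pointwise, then
`∑ z_a^{2ℓ} e(ax) ≥ -K^{2ℓ}` pointwise. -/
theorem power_coefficients (A : Finset ℤ) (h0 : (0 : ℤ) ∉ A)
    (hsym : ∀ a : ℤ, a ∈ A ↔ -a ∈ A)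
    (z : ℤ → ℝ) (hz : ∀ a ∈ A, z a = z (-a)) (K : ℝ) (hK : 0 ≤ K)
    (hmin : ∀ x : ℝ, -K ≤ (∑ a ∈ A, (z a : ℂ) * eC ((a : ℝ) * x)).re) :
    ∀ ℓ : ℕ, 0 < ℓ → ∀ x : ℝ,
      -(K ^ (2 * ℓ)) ≤ (∑ a ∈ A, ((z a ^ (2 * ℓ) : ℝ) : ℂ) * eC ((a : ℝ) * x)).re :=
  power_coefficients_general A h0 hsym z hz K hmin
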